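/- arXiv:1312.6423 — 2 statements merged into one kernel-verified Lean document; each statement's English description precedes it below -/
import Mathlib

section
/- Let g be a stratified Lie algebra of step s equipped with its canonical inner product, and let D : g → g be a derivation of g with D(g_{-k}) ⊆ g_{-k} for every k (a strata-preserving derivation). If D is skew-symmetric on g_{-1}, that is ⟨D(X), Y⟩ + ⟨X, D(Y)⟩ = 0 for all X, Y ∈ g_{-1}, then D is skew-symmetric on all of g: ⟨D(X), Y⟩ + ⟨X, D(Y)⟩ = 0 for all X, Y ∈ g. -/
open scoped RealInnerProductSpace


/-- The subspace spanned by brackets of elements of two subspaces of a Lie algebra. -/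
def bracketSpan {L : Type*} [LieRing L] [LieAlgebra ℝ L] (A B : Submodule ℝ L) :
    Submodule ℝ L :=
  Submodule.span ℝ {z : L | ∃ x ∈ A, ∃ y ∈ B, z = ⁅x, y⁆}

/-- A stratification of step `s` of a Lie algebra `L`: `g j` plays the role of the
stratum `g_{-j}`. -/
structure IsStratification {L : Type*} [LieRing L] [LieAlgebra ℝ L]
    (s : ℕ) (g : ℕ → Submodule ℝ L) : Prop where
  pos : 0 < s
  isInternal : DirectSum.IsInternal g
  g_zero : g 0 = ⊥
  g_of_gt : ∀ j, s < j → g j = ⊥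
  bracket_eq : ∀ j, 1 ≤ j → j ≤ s → bracketSpan (g j) (g 1) = g (j + 1)
  g_s_ne_bot : g s ≠ ⊥

/-- The iterated bracket `[...[[E_{w 0}, E_{w 1}], E_{w 2}], ..., E_{w (j-1)}]`. -/
def iterBracket {L : Type*} [LieRing L] [LieAlgebra ℝ L] {d : ℕ} (E : Fin d → L) :
    (j : ℕ) → (Fin j → Fin d) → L
  | 0, _ => 0
  | 1, w => E (w 0)
  | j + 2, w => ⁅iterBracket E (j + 1) (fun k => w k.castSucc), E (w (Fin.last (j + 1)))⁆

/-- The linear map `P_j` from the Euclidean space with orthonormal basis indexed by the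
tuples in `{1, ..., d}^j`, sending the basis vector indexed by `w` to the iterated bracket
`[...[[E_{w 0}, E_{w 1}], E_{w 2}], ..., E_{w (j-1)}]`. -/
noncomputable def projP {L : Type*} [LieRing L] [LieAlgebra ℝ L] {d : ℕ} (E : Fin d → L)
    (j : ℕ) : EuclideanSpace ℝ (Fin j → Fin d) →ₗ[ℝ] L :=
  ((EuclideanSpace.basisFun (Fin j → Fin d) ℝ).toBasis).constr ℝ fun w => iterBracket E j w

/-- The norm associated to a bilinear form `B` on `L`. -/
noncomputable def bnorm {L : Type*} [LieRing L] [LieAlgebra ℝ L]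
    (B : L →ₗ[ℝ] L →ₗ[ℝ] ℝ) (x : L) : ℝ :=
  Real.sqrt (B x x)

/-- `B` is the canonical inner product of a stratified Lie algebra with stratification
`g` of step `s`, relative to the orthonormal basis `E` of the first stratum:
`B` is an inner product, the strata are pairwise orthogonal, `E` is an orthonormal
basis of `g_{-1}`, and for `1 ≤ j ≤ s` the map `P_j` is surjective onto `g_{-j}` and
restricts to a linear isometry from the orthogonal complement of its kernel onto
`g_{-j}`. -/
structure IsCanonicalInner {L : Type*} [LieRing L] [LieAlgebra ℝ L] (s : ℕ) {d : ℕ}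
    (g : ℕ → Submodule ℝ L) (B : L →ₗ[ℝ] L →ₗ[ℝ] ℝ) (E : Fin d → L) : Prop where
  symm : ∀ x y, B x y = B y x
  posdef : ∀ x : L, x ≠ 0 → 0 < B x x
  strata_orth : ∀ i j, i ≠ j → ∀ x ∈ g i, ∀ y ∈ g j, B x y = 0
  basis_mem : ∀ i, E i ∈ g 1
  basis_span : Submodule.span ℝ (Set.range E) = g 1
  basis_orthonormal : ∀ i i', B (E i) (E i') = if i = i' then (1 : ℝ) else 0
  projP_surj : ∀ j, 1 ≤ j → j ≤ s → LinearMap.range (projP E j) = g j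
  projP_isometry : ∀ j, 1 ≤ j → j ≤ s →
    ∀ τ ∈ (LinearMap.ker (projP E j))ᗮ, bnorm B (projP E j τ) = ‖τ‖

section Aux

variable {L : Type*} [LieRing L] [LieAlgebra ℝ L] {d : ℕ}

omit [LieAlgebra ℝ L] in
lemma aux_sum_lie {ι : Type*} (s : Finset ι) (f : ι → L) (y : L) :
    ⁅∑ i ∈ s, f i, y⁆ = ∑ i ∈ s, ⁅f i, y⁆ := by
  induction s using Finset.cons_induction with
  | empty => simp
  | cons a s ha ih => simp [Finset.sum_cons, ih, add_lie]

omit [LieAlgebra ℝ L] in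
lemma aux_lie_sum {ι : Type*} (s : Finset ι) (f : ι → L) (y : L) :
    ⁅y, ∑ i ∈ s, f i⁆ = ∑ i ∈ s, ⁅y, f i⁆ := by
  induction s using Finset.cons_induction with
  | empty => simp
  | cons a s ha ih => simp [Finset.sum_cons, ih, lie_add]

/-- Leibniz rule for iterated brackets. -/
lemma aux_iter_deriv (E : Fin d → L) (D : L →ₗ[ℝ] L)
    (hder : ∀ x y : L, D ⁅x, y⁆ = ⁅D x, y⁆ + ⁅x, D y⁆)
    (c : Fin d → Fin d → ℝ) (hc : ∀ i, D (E i) = ∑ k, c i k • E k) :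
    ∀ (j : ℕ) (w : Fin j → Fin d),
      D (iterBracket E j w)
        = ∑ p : Fin j, ∑ k : Fin d, c (w p) k • iterBracket E j (Function.update w p k) := by
  intro j
  induction j using Nat.twoStepInduction with
  | zero => intro w; simp [iterBracket]
  | one =>
      intro w
      have h0 : ∀ k : Fin d, iterBracket E 1 (Function.update w 0 k) = E k := by
        intro k; simp [iterBracket]
      simp only [iterBracket, Fin.sum_univ_one, h0]
      exact hc (w 0)
  | more j ih1 ih2 =>
      intro w
      set w' : Fin (j + 1) → Fin d := fun k => w k.castSucc with hw'
      have key1 : ∀ (q : Fin (j+1)) (k : Fin d),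
          iterBracket E (j+2) (Function.update w q.castSucc k)
            = ⁅iterBracket E (j+1) (Function.update w' q k), E (w (Fin.last (j+1)))⁆ := by
        intro q k
        show ⁅iterBracket E (j+1) (fun m => Function.update w q.castSucc k m.castSucc),
              E (Function.update w q.castSucc k (Fin.last (j+1)))⁆ = _
        have e1 : (fun m => Function.update w q.castSucc k m.castSucc)
            = Function.update w' q k := by
          funext m
          by_cases hm : m = q
          · subst hm; simp
          · rw [Function.update_of_ne (fun h => hm (Fin.castSucc_injective _ h)),
              Function.update_of_ne hm]
        have e2 : Function.update w q.castSucc k (Fin.last (j+1)) = w (Fin.last (j+1)) :=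
          Function.update_of_ne (Fin.castSucc_lt_last q).ne' _ _
        rw [e1, e2]
      have key2 : ∀ k : Fin d,
          iterBracket E (j+2) (Function.update w (Fin.last (j+1)) k)
            = ⁅iterBracket E (j+1) w', E k⁆ := by
        intro k
        show ⁅iterBracket E (j+1) (fun m => Function.update w (Fin.last (j+1)) k m.castSucc),
              E (Function.update w (Fin.last (j+1)) k (Fin.last (j+1)))⁆ = _
        have e1 : (fun m => Function.update w (Fin.last (j+1)) k m.castSucc) = w' := by
          funext m
          rw [Function.update_of_ne (Fin.castSucc_lt_last m).ne]
        rw [e1, Function.update_self]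
      have hlhs : D (iterBracket E (j+2) w)
          = ⁅D (iterBracket E (j+1) w'), E (w (Fin.last (j+1)))⁆
            + ⁅iterBracket E (j+1) w', D (E (w (Fin.last (j+1))))⁆ := by
        show D ⁅iterBracket E (j+1) (fun k => w k.castSucc), E (w (Fin.last (j+1)))⁆ = _
        rw [hder]
      rw [hlhs, ih2 w', hc (w (Fin.last (j+1)))]
      rw [Fin.sum_univ_castSucc
        (f := fun p => ∑ k : Fin d, c (w p) k • iterBracket E (j+2) (Function.update w p k))]
      congr 1
      · rw [aux_sum_lie]
        refine Finset.sum_congr rfl fun q _ => ?_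
        rw [aux_sum_lie]
        refine Finset.sum_congr rfl fun k _ => ?_
        rw [key1 q k, smul_lie]
      · rw [aux_lie_sum]
        refine Finset.sum_congr rfl fun k _ => ?_
        rw [key2 k, lie_smul]

end Aux

/-- The skew operator on the Euclidean space of tuples induced by a skew matrix `c`. -/
noncomputable def tupleDeriv (j d : ℕ) (c : Fin d → Fin d → ℝ) :
    EuclideanSpace ℝ (Fin j → Fin d) →ₗ[ℝ] EuclideanSpace ℝ (Fin j → Fin d) :=
  ((EuclideanSpace.basisFun (Fin j → Fin d) ℝ).toBasis).constr ℝ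
    (fun w => ∑ p : Fin j, ∑ k : Fin d,
      c (w p) k • (EuclideanSpace.basisFun (Fin j → Fin d) ℝ).toBasis (Function.update w p k))

lemma tupleDeriv_skew (j d : ℕ) (c : Fin d → Fin d → ℝ) (hskew : ∀ i k, c i k + c k i = 0) :
    ∀ τ σ : EuclideanSpace ℝ (Fin j → Fin d),
      ⟪tupleDeriv j d c τ, σ⟫ + ⟪τ, tupleDeriv j d c σ⟫ = 0 := by
  classical
  set e := EuclideanSpace.basisFun (Fin j → Fin d) ℝ with he
  set b := e.toBasis with hb
  set Dt := tupleDeriv j d c with hDt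
  have hon : ∀ u v : Fin j → Fin d, ⟪b u, b v⟫ = if u = v then (1:ℝ) else 0 := by
    intro u v
    rw [hb, OrthonormalBasis.coe_toBasis]
    exact orthonormal_iff_ite.mp e.orthonormal u v
  have hDtb : ∀ w, Dt (b w) = ∑ p : Fin j, ∑ k : Fin d, c (w p) k • b (Function.update w p k) :=
    fun w => Module.Basis.constr_basis b ℝ _ w
  have hinner_b : ∀ w v, ⟪Dt (b w), b v⟫
      = ∑ p : Fin j, (if (∀ q, q ≠ p → w q = v q) then c (w p) (v p) else 0) := by
    intro w v
    rw [hDtb w, sum_inner]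
    refine Finset.sum_congr rfl fun p _ => ?_
    rw [sum_inner]
    by_cases hC : ∀ q, q ≠ p → w q = v q
    · rw [if_pos hC, Finset.sum_eq_single (v p)]
      · rw [real_inner_smul_left, hon, if_pos (Function.update_eq_iff.mpr ⟨rfl, hC⟩), mul_one]
      · intro k _ hk
        rw [real_inner_smul_left, hon, if_neg, mul_zero]
        intro h
        exact hk (by simpa using congrFun h p)
      · intro h; exact absurd (Finset.mem_univ _) h
    · rw [if_neg hC]
      apply Finset.sum_eq_zero
      intro k _
      rw [real_inner_smul_left, hon, if_neg, mul_zero]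
      intro h
      exact hC fun q hq => by
        have := congrFun h q
        rwa [Function.update_of_ne hq] at this
  have hbasis : ∀ w v, ⟪Dt (b w), b v⟫ + ⟪b w, Dt (b v)⟫ = 0 := by
    intro w v
    have h2 : ⟪b w, Dt (b v)⟫ = ∑ p : Fin j,
        (if (∀ q, q ≠ p → v q = w q) then c (v p) (w p) else 0) := by
      rw [real_inner_comm]; exact hinner_b v w
    rw [hinner_b w v, h2, ← Finset.sum_add_distrib]
    apply Finset.sum_eq_zero
    intro p _
    have hiff : (∀ q, q ≠ p → v q = w q) ↔ (∀ q, q ≠ p → w q = v q) :=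
      ⟨fun h q hq => (h q hq).symm, fun h q hq => (h q hq).symm⟩
    by_cases hC : ∀ q, q ≠ p → w q = v q
    · rw [if_pos hC, if_pos (hiff.mpr hC)]
      exact hskew (w p) (v p)
    · rw [if_neg hC, if_neg (fun h => hC (hiff.mp h)), add_zero]
  intro τ σ
  have e1 : ⟪Dt τ, σ⟫ = ∑ w, ∑ v, (b.repr τ w * b.repr σ v) * ⟪Dt (b w), b v⟫ := by
    conv_lhs => rw [← b.sum_repr τ, ← b.sum_repr σ]
    rw [map_sum, sum_inner]
    refine Finset.sum_congr rfl fun w _ => ?_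
    rw [map_smul, real_inner_smul_left, inner_sum, Finset.mul_sum]
    refine Finset.sum_congr rfl fun v _ => ?_
    rw [real_inner_smul_right]; ring
  have e2 : ⟪τ, Dt σ⟫ = ∑ w, ∑ v, (b.repr τ w * b.repr σ v) * ⟪b w, Dt (b v)⟫ := by
    conv_lhs => rw [← b.sum_repr τ, ← b.sum_repr σ]
    rw [map_sum, sum_inner]
    refine Finset.sum_congr rfl fun w _ => ?_
    rw [real_inner_smul_left, inner_sum, Finset.mul_sum]
    refine Finset.sum_congr rfl fun v _ => ?_
    rw [map_smul, real_inner_smul_right]; ring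
  rw [e1, e2, ← Finset.sum_add_distrib]
  apply Finset.sum_eq_zero; intro w _
  rw [← Finset.sum_add_distrib]
  apply Finset.sum_eq_zero; intro v _
  rw [← mul_add, hbasis w v, mul_zero]

/-- a strata-preserving derivation of a stratified Lie algebra with its
canonical inner product that is skew-symmetric on `g_{-1}` is skew-symmetric on all
of `g`. -/
theorem skewSymmetric_of_skewSymmetric_on_first_stratum
    {L : Type*} [LieRing L] [LieAlgebra ℝ L] [FiniteDimensional ℝ L]
    {s d : ℕ} {g : ℕ → Submodule ℝ L} {B : L →ₗ[ℝ] L →ₗ[ℝ] ℝ} {E : Fin d → L}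
    (hstrat : IsStratification s g) (hinner : IsCanonicalInner s g B E)
    (D : L →ₗ[ℝ] L) (hder : ∀ x y : L, D ⁅x, y⁆ = ⁅D x, y⁆ + ⁅x, D y⁆)
    (hD : ∀ k, ∀ x ∈ g k, D x ∈ g k)
    (h1 : ∀ X ∈ g 1, ∀ Y ∈ g 1, B (D X) Y + B X (D Y) = 0) :
    ∀ X Y : L, B (D X) Y + B X (D Y) = 0 := by
  classical
  -- Step 1: coefficients of D on the first stratum
  have hDE : ∀ i, D (E i) ∈ Submodule.span ℝ (Set.range E) := by
    intro i
    rw [hinner.basis_span]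
    exact hD 1 _ (hinner.basis_mem i)
  have hDE' : ∀ i, ∃ cc : Fin d → ℝ, ∑ k, cc k • E k = D (E i) :=
    fun i => (Submodule.mem_span_range_iff_exists_fun ℝ).mp (hDE i)
  choose c hc using hDE'
  have hc' : ∀ i, D (E i) = ∑ k, c i k • E k := fun i => (hc i).symm
  have hcB : ∀ i k, B (D (E i)) (E k) = c i k := by
    intro i k
    rw [hc' i, map_sum, LinearMap.sum_apply]
    rw [Finset.sum_eq_single k]
    · rw [map_smul, LinearMap.smul_apply, hinner.basis_orthonormal, if_pos rfl,
        smul_eq_mul, mul_one]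
    · intro m _ hm
      rw [map_smul, LinearMap.smul_apply, hinner.basis_orthonormal, if_neg hm,
        smul_eq_mul, mul_zero]
    · intro h; exact absurd (Finset.mem_univ _) h
  have hcskew : ∀ i k, c i k + c k i = 0 := by
    intro i k
    have h := h1 (E i) (hinner.basis_mem i) (E k) (hinner.basis_mem k)
    rw [hinner.symm (E i) (D (E k))] at h
    rw [← hcB i k, ← hcB k i]
    exact h
  -- Step 2: Leibniz rule for iterated brackets
  have hiter := aux_iter_deriv E D hder c hc'
  -- Step 3: the main case, within one stratum
  have hmain : ∀ j, 1 ≤ j → j ≤ s → ∀ x ∈ g j, ∀ y ∈ g j,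
      B (D x) y + B x (D y) = 0 := by
    intro j hj1 hjs x hx y hy
    set P := projP E j with hP
    set K := LinearMap.ker P with hK
    set Dt := tupleDeriv j d c with hDt
    set b := (EuclideanSpace.basisFun (Fin j → Fin d) ℝ).toBasis with hb
    -- P ∘ Dt = D ∘ P
    have hPDt : ∀ τ, P (Dt τ) = D (P τ) := by
      have : P.comp Dt = D.comp P := by
        apply Module.Basis.ext b
        intro w
        simp only [LinearMap.comp_apply]
        rw [hDt, hP]
        rw [show (tupleDeriv j d c) (b w)
            = ∑ p : Fin j, ∑ k : Fin d, c (w p) k • b (Function.update w p k) from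
          Module.Basis.constr_basis b ℝ _ w]
        rw [show (projP E j) (b w) = iterBracket E j w from Module.Basis.constr_basis b ℝ _ w]
        rw [map_sum, hiter j w]
        refine Finset.sum_congr rfl fun p _ => ?_
        rw [map_sum]
        refine Finset.sum_congr rfl fun k _ => ?_
        rw [map_smul]
        congr 1
        exact Module.Basis.constr_basis b ℝ _ _
      intro τ
      exact congrFun (congrArg (fun f => f.toFun) this) τ
    -- B on the image of P restricted to Kᗮ is the inner product
    have hBsq : ∀ τ ∈ Kᗮ, B (P τ) (P τ) = ⟪τ, τ⟫ := by
      intro τ hτ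
      have hnn : 0 ≤ B (P τ) (P τ) := by
        rcases eq_or_ne (P τ) 0 with h | h
        · rw [h]; simp
        · exact (hinner.posdef _ h).le
      have hiso := hinner.projP_isometry j hj1 hjs τ hτ
      have : B (P τ) (P τ) = ‖τ‖ ^ 2 := by
        rw [← hiso]
        rw [bnorm] at *
        rw [Real.sq_sqrt hnn]
      rw [this, real_inner_self_eq_norm_sq]
    have hBpol : ∀ τ ∈ Kᗮ, ∀ σ ∈ Kᗮ, B (P τ) (P σ) = ⟪τ, σ⟫ := by
      intro τ hτ σ hσ
      have h0 := hBsq (τ + σ) (Submodule.add_mem _ hτ hσ)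
      rw [map_add] at h0
      simp only [map_add, LinearMap.add_apply] at h0
      rw [inner_add_add_self] at h0
      have h1' := hBsq τ hτ
      have h2' := hBsq σ hσ
      have hsymm := hinner.symm (P σ) (P τ)
      have hinn : ⟪σ, τ⟫ = ⟪τ, σ⟫ := real_inner_comm τ σ
      linarith
    -- decomposition
    have hcompl : IsCompl K Kᗮ := Submodule.isCompl_orthogonal_of_hasOrthogonalProjection
    have hdec : ∀ υ : EuclideanSpace ℝ (Fin j → Fin d),
        ∃ k ∈ K, ∃ q ∈ Kᗮ, k + q = υ := by
      intro υ
      have : υ ∈ K ⊔ Kᗮ := by rw [hcompl.sup_eq_top]; trivial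
      exact Submodule.mem_sup.mp this
    have hPker : ∀ u ∈ K, P u = 0 := fun u hu => hu
    -- lift x and y
    have hxr : x ∈ LinearMap.range P := by rw [hP, hinner.projP_surj j hj1 hjs]; exact hx
    have hyr : y ∈ LinearMap.range P := by rw [hP, hinner.projP_surj j hj1 hjs]; exact hy
    obtain ⟨τ₀, hτ₀⟩ := hxr
    obtain ⟨σ₀, hσ₀⟩ := hyr
    obtain ⟨k₀, hk₀, τ, hτ, hkτ⟩ := hdec τ₀
    obtain ⟨m₀, hm₀, σ, hσ, hmσ⟩ := hdec σ₀
    have hPτ : P τ = x := by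
      rw [← hτ₀, ← hkτ, map_add, hPker k₀ hk₀, zero_add]
    have hPσ : P σ = y := by
      rw [← hσ₀, ← hmσ, map_add, hPker m₀ hm₀, zero_add]
    -- decompose Dt τ and Dt σ
    obtain ⟨k₁, hk₁, τ₁, hτ₁, hkτ₁⟩ := hdec (Dt τ)
    obtain ⟨m₁, hm₁, σ₁, hσ₁, hmσ₁⟩ := hdec (Dt σ)
    have hDx : D x = P τ₁ := by
      rw [← hPτ, ← hPDt τ, ← hkτ₁, map_add, hPker k₁ hk₁, zero_add]
    have hDy : D y = P σ₁ := by
      rw [← hPσ, ← hPDt σ, ← hmσ₁, map_add, hPker m₁ hm₁, zero_add]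
    have horth1 : ⟪k₁, σ⟫ = 0 := hσ k₁ hk₁
    have horth2 : ⟪m₁, τ⟫ = 0 := hτ m₁ hm₁
    have e1 : B (D x) y = ⟪Dt τ, σ⟫ := by
      rw [hDx, ← hPσ, hBpol τ₁ hτ₁ σ hσ, ← hkτ₁, inner_add_left, horth1, zero_add]
    have e2 : B x (D y) = ⟪τ, Dt σ⟫ := by
      have hA : B x (D y) = ⟪σ₁, τ⟫ := by
        rw [hinner.symm, hDy, ← hPτ]; exact hBpol σ₁ hσ₁ τ hτ
      have hB2 : ⟪τ, Dt σ⟫ = ⟪τ, σ₁⟫ := by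
        rw [← hmσ₁, inner_add_right, (real_inner_comm m₁ τ).trans horth2, zero_add]
      rw [hA, hB2]
      exact real_inner_comm τ σ₁
    rw [e1, e2]
    exact tupleDeriv_skew j d c hcskew τ σ
  -- Step 4: pairwise strata
  have hpair : ∀ i jj, ∀ x ∈ g i, ∀ y ∈ g jj, B (D x) y + B x (D y) = 0 := by
    intro i jj x hx y hy
    rcases eq_or_ne i jj with rfl | hne
    · rcases Nat.eq_zero_or_pos i with rfl | hipos
      · have : x = 0 := by
          rw [hstrat.g_zero] at hx
          simpa using hx
        rw [this]; simp
      · rcases le_or_gt i s with his | his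
        · exact hmain i hipos his x hx y hy
        · have : x = 0 := by
            rw [hstrat.g_of_gt i his] at hx
            simpa using hx
          rw [this]; simp
    · have ha := hinner.strata_orth i jj hne (D x) (hD i x hx) y hy
      have hb' := hinner.strata_orth i jj hne x hx (D y) (hD jj y hy)
      rw [ha, hb']
      ring
  -- Step 5: extend to all of L by the direct sum decomposition
  have htop : ∀ X : L, X ∈ ⨆ k, g k := by
    intro X
    rw [hstrat.isInternal.submodule_iSup_eq_top]
    trivial
  have hone : ∀ (i : ℕ), ∀ x ∈ g i, ∀ Y : L, B (D x) Y + B x (D Y) = 0 := by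
    intro i x hx Y
    refine Submodule.iSup_induction g (motive := fun Y => B (D x) Y + B x (D Y) = 0) (htop Y)
      (fun jj y hy => hpair i jj x hx y hy) (by simp) ?_
    intro y z hy hz
    simp only [map_add] at *
    linarith
  intro X Y
  refine Submodule.iSup_induction g (motive := fun X => B (D X) Y + B X (D Y) = 0) (htop X)
    (fun i x hx => hone i x hx Y) (by simp) ?_
  intro x y hx hy
  simp only [map_add, LinearMap.add_apply] at *
  linarith
end

section
/- Let g be a stratified Lie algebra of step s equipped with its canonical inner product, and let T : g → g be a Lie algebra automorphism with T(g_{-k}) ⊆ g_{-k} for every k, such that for some t > 0, ‖T(X)‖ = t‖X‖ for every X ∈ g_{-1} (a conformal automorphism with dilation factor t). Then ‖T(X)‖ = ‖δ_t(X)‖ for every X ∈ g; equivalently, ‖T(X)‖ = t^j‖X‖ for every X ∈ g_{-j} and every j. -/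
theorem projP_apply {L : Type*} [LieRing L] [LieAlgebra ℝ L] {d : ℕ} (E : Fin d → L)
    (j : ℕ) (x : EuclideanSpace ℝ (Fin j → Fin d)) :
    projP E j x = ∑ w : Fin j → Fin d, x w • iterBracket E j w := by
  simp only [projP, Module.Basis.constr_apply_fintype, Module.Basis.equivFun_apply,
    OrthonormalBasis.coe_toBasis_repr_apply, EuclideanSpace.basisFun_repr]

example (ι : Type*) [Fintype ι] (x y : EuclideanSpace ℝ ι) :
    (inner ℝ x y : ℝ) = ∑ i, x i * y i := by
  simp [PiLp.inner_apply, RCLike.inner_apply, mul_comm]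

-- smul lemma
theorem iterBracket_smul {L : Type*} [LieRing L] [LieAlgebra ℝ L] {d : ℕ} (G : Fin d → L)
    (c : ℝ) : ∀ (j : ℕ) (w : Fin j → Fin d),
    iterBracket (fun i => c • G i) j w = c ^ j • iterBracket G j w
  | 0, _ => by simp [iterBracket]
  | 1, w => by simp [iterBracket]
  | (j + 2), w => by
    rw [iterBracket, iterBracket, iterBracket_smul G c (j+1)]
    simp [smul_smul, pow_succ, mul_comm]

theorem map_iterBracket {L : Type*} [LieRing L] [LieAlgebra ℝ L] {d : ℕ} (E : Fin d → L)
    (T : L ≃ₗ⁅ℝ⁆ L) : ∀ (j : ℕ) (w : Fin j → Fin d),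
    T (iterBracket E j w) = iterBracket (fun i => T (E i)) j w
  | 0, _ => by rw [iterBracket, iterBracket]; exact T.toLinearEquiv.map_zero
  | 1, w => by simp [iterBracket]
  | (j + 2), w => by
    rw [iterBracket, iterBracket, ← map_iterBracket E T (j+1), T.map_lie]

theorem my_sum_lie {L : Type*} [LieRing L] {ι : Type*} (s : Finset ι) (f : ι → L) (y : L) :
    ⁅∑ i ∈ s, f i, y⁆ = ∑ i ∈ s, ⁅f i, y⁆ := by
  induction s using Finset.cons_induction with
  | empty => simp
  | cons a s ha ih => simp [Finset.sum_cons, add_lie, ih]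

theorem my_lie_sum {L : Type*} [LieRing L] {ι : Type*} (s : Finset ι) (x : L) (f : ι → L) :
    ⁅x, ∑ i ∈ s, f i⁆ = ∑ i ∈ s, ⁅x, f i⁆ := by
  induction s using Finset.cons_induction with
  | empty => simp
  | cons a s ha ih => simp [Finset.sum_cons, lie_add, ih]

theorem iterBracket_expand {L : Type*} [LieRing L] [LieAlgebra ℝ L] {d : ℕ}
    (E F : Fin d → L) (a : Fin d → Fin d → ℝ) (hFa : ∀ i, F i = ∑ k, a i k • E k) :
    ∀ (j : ℕ) (w : Fin j → Fin d),
    iterBracket F j w = ∑ v : Fin j → Fin d, (∏ k, a (w k) (v k)) • iterBracket E j v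
  | 0, w => by simp [iterBracket]
  | 1, w => by
    rw [iterBracket, hFa]
    refine Fintype.sum_equiv (Equiv.funUnique (Fin 1) (Fin d)).symm _ _ fun k => ?_
    simp [iterBracket]
  | (j + 2), w => by
    rw [iterBracket, iterBracket_expand E F a hFa (j+1), hFa (w (Fin.last (j+1)))]
    rw [my_sum_lie]
    calc
      ∑ v : Fin (j + 1) → Fin d,
          ⁅(∏ k, a (w k.castSucc) (v k)) • iterBracket E (j+1) v,
            ∑ m, a (w (Fin.last (j+1))) m • E m⁆
        = ∑ v : Fin (j + 1) → Fin d, ∑ m : Fin d,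
            ((∏ k, a (w k.castSucc) (v k)) * a (w (Fin.last (j+1))) m) •
              iterBracket E (j+2) (Fin.snoc v m) := by
          refine Finset.sum_congr rfl fun v _ => ?_
          rw [my_lie_sum]
          refine Finset.sum_congr rfl fun m _ => ?_
          rw [smul_lie, lie_smul, smul_smul]
          congr 1
          rw [iterBracket]
          congr 1
          · congr 1; funext k; rw [Fin.snoc_castSucc]
          · rw [Fin.snoc_last]
      _ = ∑ u : Fin (j + 2) → Fin d, (∏ k, a (w k) (u k)) • iterBracket E (j+2) u := by
          rw [← Finset.sum_product']
          refine Fintype.sum_equiv ((Equiv.prodComm _ _).trans (Fin.snocEquiv (fun _ => Fin d)))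
            _ _ fun p => ?_
          obtain ⟨v, m⟩ := p
          have he : ((Equiv.prodComm _ _).trans (Fin.snocEquiv (fun _ : Fin (j+2) => Fin d)))
              (v, m) = Fin.snoc v m := rfl
          rw [he]
          congr 1
          conv_rhs => rw [Fin.prod_univ_castSucc]
          simp [Fin.snoc_castSucc, Fin.snoc_last]

noncomputable def rotO {d : ℕ} (a : Fin d → Fin d → ℝ) (j : ℕ) :
    EuclideanSpace ℝ (Fin j → Fin d) →ₗ[ℝ] EuclideanSpace ℝ (Fin j → Fin d) where
  toFun x := WithLp.toLp 2 fun v => ∑ w : Fin j → Fin d, (∏ k, a (w k) (v k)) * x w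
  map_add' x y := by
    ext v
    simp only [PiLp.add_apply, mul_add, Finset.sum_add_distrib]
  map_smul' c x := by
    ext v
    simp only [PiLp.smul_apply, RingHom.id_apply, smul_eq_mul, Finset.mul_sum]
    exact Finset.sum_congr rfl fun w _ => by ring

theorem rotO_apply {d : ℕ} (a : Fin d → Fin d → ℝ) (j : ℕ)
    (x : EuclideanSpace ℝ (Fin j → Fin d)) (v : Fin j → Fin d) :
    rotO a j x v = ∑ w : Fin j → Fin d, (∏ k, a (w k) (v k)) * x w := rfl

theorem rotO_gram {d : ℕ} (a : Fin d → Fin d → ℝ)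
    (hA : ∀ i i', ∑ k, a i k * a i' k = if i = i' then (1:ℝ) else 0) (j : ℕ)
    (w w' : Fin j → Fin d) :
    ∑ v : Fin j → Fin d, (∏ k, a (w k) (v k)) * (∏ k, a (w' k) (v k)) =
      if w = w' then (1:ℝ) else 0 := by
  have : ∀ v : Fin j → Fin d, (∏ k, a (w k) (v k)) * (∏ k, a (w' k) (v k)) =
      ∏ k, (a (w k) (v k) * a (w' k) (v k)) := fun v => (Finset.prod_mul_distrib).symm
  simp_rw [this]
  rw [← Fintype.prod_sum (fun k m => a (w k) m * a (w' k) m)]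
  simp_rw [hA]
  by_cases h : w = w'
  · subst h; simp
  · rw [if_neg h]
    obtain ⟨k, hk⟩ := Function.ne_iff.mp h
    exact Finset.prod_eq_zero (Finset.mem_univ k) (by rw [if_neg hk])

theorem rotO_inner {d : ℕ} (a : Fin d → Fin d → ℝ)
    (hA : ∀ i i', ∑ k, a i k * a i' k = if i = i' then (1:ℝ) else 0) (j : ℕ)
    (x y : EuclideanSpace ℝ (Fin j → Fin d)) :
    (inner ℝ (rotO a j x) (rotO a j y) : ℝ) = inner ℝ x y := by
  rw [real_inner_comm (rotO a j y) (rotO a j x), real_inner_comm y x]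
  simp only [PiLp.inner_apply, RCLike.inner_apply, starRingEnd_apply, star_trivial]
  have : ∀ v, rotO a j x v * rotO a j y v =
      ∑ w : Fin j → Fin d, ∑ w' : Fin j → Fin d,
        ((∏ k, a (w k) (v k)) * (∏ k, a (w' k) (v k))) * (x w * y w') := by
    intro v
    rw [rotO_apply, rotO_apply, Finset.sum_mul_sum]
    exact Finset.sum_congr rfl fun w _ => Finset.sum_congr rfl fun w' _ => by ring
  simp_rw [this]
  rw [Finset.sum_comm]
  have : ∀ w : Fin j → Fin d, ∑ v : Fin j → Fin d, ∑ w' : Fin j → Fin d,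
      ((∏ k, a (w k) (v k)) * (∏ k, a (w' k) (v k))) * (x w * y w') =
      ∑ w' : Fin j → Fin d, (if w = w' then (1:ℝ) else 0) * (x w * y w') := by
    intro w
    rw [Finset.sum_comm]
    refine Finset.sum_congr rfl fun w' _ => ?_
    rw [← Finset.sum_mul, rotO_gram a hA]
  simp_rw [this]
  refine Finset.sum_congr rfl fun w _ => ?_
  simp [Finset.sum_ite_eq]

section Aux
variable {L : Type*} [LieRing L] [LieAlgebra ℝ L]

theorem bnn {B : L →ₗ[ℝ] L →ₗ[ℝ] ℝ} (hpos : ∀ x : L, x ≠ 0 → 0 < B x x) (x : L) :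
    0 ≤ B x x := by
  by_cases hx : x = 0
  · simp [hx]
  · exact (hpos x hx).le

theorem bnorm_sq {B : L →ₗ[ℝ] L →ₗ[ℝ] ℝ} (hpos : ∀ x : L, x ≠ 0 → 0 < B x x) (x : L) :
    B x x = bnorm B x ^ 2 := by
  rw [bnorm, Real.sq_sqrt (bnn hpos x)]

theorem bnorm_nonneg (B : L →ₗ[ℝ] L →ₗ[ℝ] ℝ) (x : L) : 0 ≤ bnorm B x := Real.sqrt_nonneg _

theorem bnorm_smul (B : L →ₗ[ℝ] L →ₗ[ℝ] ℝ) (c : ℝ) (x : L) :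
    bnorm B (c • x) = |c| * bnorm B x := by
  rw [bnorm, bnorm]
  simp only [map_smul, LinearMap.smul_apply, smul_eq_mul]
  rw [← mul_assoc, ← sq, Real.sqrt_mul (sq_nonneg c), Real.sqrt_sq_eq_abs]

theorem bnorm_zero (B : L →ₗ[ℝ] L →ₗ[ℝ] ℝ) : bnorm B 0 = 0 := by
  simp [bnorm]

end Aux

theorem conf_le {L : Type*} [LieRing L] [LieAlgebra ℝ L]
    {s d : ℕ} {g : ℕ → Submodule ℝ L} {B : L →ₗ[ℝ] L →ₗ[ℝ] ℝ} {E : Fin d → L}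
    (hinner : IsCanonicalInner s g B E)
    (T : L ≃ₗ⁅ℝ⁆ L) (hT1 : ∀ x ∈ g 1, T x ∈ g 1)
    {t : ℝ} (ht : 0 < t) (h1 : ∀ X ∈ g 1, bnorm B (T X) = t * bnorm B X) :
    ∀ j, 1 ≤ j → j ≤ s → ∀ X ∈ g j, bnorm B (T X) ≤ t ^ j * bnorm B X := by
  have htne : t ≠ 0 := ht.ne'
  set Tl : L →ₗ[ℝ] L := (T.toLinearEquiv : L →ₗ[ℝ] L) with hTldef
  have hTl : ∀ x : L, T x = Tl x := fun _ => rfl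
  -- quadratic scaling on g 1
  have hq : ∀ z ∈ g 1, B (T z) (T z) = t ^ 2 * B z z := by
    intro z hz
    rw [bnorm_sq hinner.posdef (T z), h1 z hz, mul_pow, ← bnorm_sq hinner.posdef z]
  -- polarization
  have hBt : ∀ x ∈ g 1, ∀ y ∈ g 1, B (T x) (T y) = t ^ 2 * B x y := by
    intro x hx y hy
    have expand : ∀ u v : L, B (u + v) (u + v) = B u u + 2 * B u v + B v v := by
      intro u v
      simp only [map_add, LinearMap.add_apply]
      rw [hinner.symm v u]; ring
    have e1 := hq (x + y) (add_mem hx hy)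
    have e2 := hq x hx
    have e3 := hq y hy
    have e4 : T (x + y) = T x + T y := by rw [hTl, hTl, hTl, map_add]
    rw [e4, expand, expand] at e1
    nlinarith [e1, e2, e3]
  -- the orthonormal family F
  set F : Fin d → L := fun i => t⁻¹ • T (E i) with hFdef
  have hF1 : ∀ i, F i ∈ g 1 := fun i =>
    Submodule.smul_mem _ _ (hT1 (E i) (hinner.basis_mem i))
  have hFn : ∀ i i', B (F i) (F i') = if i = i' then (1 : ℝ) else 0 := by
    intro i i'
    rw [hFdef]
    simp only [map_smul, LinearMap.smul_apply, smul_eq_mul]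
    rw [hBt (E i) (hinner.basis_mem i) (E i') (hinner.basis_mem i'),
      hinner.basis_orthonormal]
    field_simp
  -- coordinates of F in the basis E
  set a : Fin d → Fin d → ℝ := fun i k => B (F i) (E k) with hadef
  have hFa : ∀ i, F i = ∑ k, a i k • E k := by
    intro i
    have hmem : F i ∈ Submodule.span ℝ (Set.range E) := by
      rw [hinner.basis_span]; exact hF1 i
    obtain ⟨c, hc⟩ := (Submodule.mem_span_range_iff_exists_fun ℝ).mp hmem
    have hck : ∀ k, a i k = c k := by
      intro k
      rw [hadef]
      simp only
      rw [← hc, map_sum, LinearMap.sum_apply]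
      simp only [map_smul, LinearMap.smul_apply, smul_eq_mul, hinner.basis_orthonormal]
      simp [Finset.sum_ite_eq']
    rw [← hc]
    exact Finset.sum_congr rfl fun k _ => by rw [hck k]
  -- orthogonality of the coefficient matrix
  have hA : ∀ i i', ∑ k, a i k * a i' k = if i = i' then (1:ℝ) else 0 := by
    intro i i'
    rw [← hFn i i']
    conv_rhs => rw [hFa i']
    rw [map_sum]
    simp only [map_smul, smul_eq_mul]
    exact Finset.sum_congr rfl fun k _ => by rw [hadef]; ring
  -- T on iterated brackets
  have hTiter : ∀ (j : ℕ) (w : Fin j → Fin d),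
      T (iterBracket E j w) = t ^ j • iterBracket F j w := by
    intro j w
    have hTE : (fun i => T (E i)) = fun i => t • F i := by
      funext i
      rw [hFdef]
      simp only [smul_smul, mul_inv_cancel₀ htne, one_smul]
    rw [map_iterBracket E T j w, hTE, iterBracket_smul]
  -- the key intertwining identity
  have key : ∀ (j : ℕ) (τ : EuclideanSpace ℝ (Fin j → Fin d)),
      T (projP E j τ) = t ^ j • projP E j (rotO a j τ) := by
    intro j τ
    rw [projP_apply, projP_apply]
    calc T (∑ w : Fin j → Fin d, τ w • iterBracket E j w)
        = ∑ w : Fin j → Fin d, τ w • T (iterBracket E j w) := by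
          rw [hTl, map_sum]
          exact Finset.sum_congr rfl fun w _ => by rw [map_smul]; rfl
      _ = ∑ w : Fin j → Fin d, τ w • t ^ j • iterBracket F j w := by
          simp_rw [hTiter j]
      _ = ∑ w : Fin j → Fin d, ∑ v : Fin j → Fin d,
            (τ w * (t ^ j * (∏ k, a (w k) (v k)))) • iterBracket E j v := by
          refine Finset.sum_congr rfl fun w _ => ?_
          rw [iterBracket_expand E F a hFa j w, Finset.smul_sum, Finset.smul_sum]
          exact Finset.sum_congr rfl fun v _ => by rw [smul_smul, smul_smul, mul_assoc]
      _ = t ^ j • ∑ v : Fin j → Fin d, rotO a j τ v • iterBracket E j v := by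
          rw [Finset.sum_comm, Finset.smul_sum]
          refine Finset.sum_congr rfl fun v _ => ?_
          rw [rotO_apply, smul_smul, Finset.mul_sum, Finset.sum_smul]
          refine Finset.sum_congr rfl fun w _ => ?_
          congr 1
          ring
  -- the main bound
  intro j hj1 hjs X hX
  obtain ⟨σ, hσ⟩ : ∃ σ, projP E j σ = X := by
    rw [← hinner.projP_surj j hj1 hjs] at hX
    exact hX
  obtain ⟨κ, hκ, τ, hτ, hστ⟩ :=
    (LinearMap.ker (projP E j)).exists_add_mem_mem_orthogonal σ
  have hPτ : projP E j τ = X := by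
    rw [← hσ, hστ, map_add, LinearMap.mem_ker.mp hκ, zero_add]
  have hnX : bnorm B X = ‖τ‖ := by
    rw [← hPτ]
    exact hinner.projP_isometry j hj1 hjs τ hτ
  obtain ⟨κ', hκ', σ', hσ', hdec⟩ :=
    (LinearMap.ker (projP E j)).exists_add_mem_mem_orthogonal (rotO a j τ)
  have hTX : T X = t ^ j • projP E j σ' := by
    rw [← hPτ, key j τ, hdec, map_add, LinearMap.mem_ker.mp hκ', zero_add]
  have hnTX : bnorm B (T X) = t ^ j * ‖σ'‖ := by
    rw [hTX, bnorm_smul, abs_of_pos (pow_pos ht j),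
      hinner.projP_isometry j hj1 hjs σ' hσ']
  have hle : ‖σ'‖ ≤ ‖rotO a j τ‖ := by
    rw [hdec]
    have hinner0 : (inner ℝ κ' σ' : ℝ) = 0 :=
      (Submodule.mem_orthogonal _ σ').mp hσ' κ' hκ'
    have hsq : ‖κ' + σ'‖ ^ 2 = ‖κ'‖ ^ 2 + ‖σ'‖ ^ 2 := by
      rw [@norm_add_sq_real, hinner0]; ring
    nlinarith [norm_nonneg κ', norm_nonneg σ', norm_nonneg (κ' + σ')]
  have hOn : ‖rotO a j τ‖ = ‖τ‖ := by
    have h0 := rotO_inner a hA j τ τ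
    rw [real_inner_self_eq_norm_sq, real_inner_self_eq_norm_sq] at h0
    nlinarith [norm_nonneg (rotO a j τ), norm_nonneg τ]
  rw [hnTX, hnX]
  have := le_trans hle (le_of_eq hOn)
  nlinarith [pow_pos ht j]

/-- if `T` is a strata-preserving automorphism of a stratified Lie algebra
with its canonical inner product which is conformal with dilation factor `t` on `g_{-1}`,
then `‖T X‖ = ‖δ_t X‖` for all `X ∈ g`; equivalently `‖T X‖ = t ^ j * ‖X‖` on `g_{-j}`. -/
theorem conformal_automorphism_norm_eq_dilation
    {L : Type*} [LieRing L] [LieAlgebra ℝ L] [FiniteDimensional ℝ L]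
    {s d : ℕ} {g : ℕ → Submodule ℝ L} {B : L →ₗ[ℝ] L →ₗ[ℝ] ℝ} {E : Fin d → L}
    (hstrat : IsStratification s g) (hinner : IsCanonicalInner s g B E)
    (T : L ≃ₗ⁅ℝ⁆ L) (hT : ∀ k, ∀ x ∈ g k, T x ∈ g k)
    {t : ℝ} (ht : 0 < t) (h1 : ∀ X ∈ g 1, bnorm B (T X) = t * bnorm B X) :
    (∀ δ : L →ₗ[ℝ] L, (∀ j : ℕ, ∀ x ∈ g j, δ x = t ^ j • x) →
        ∀ X : L, bnorm B (T X) = bnorm B (δ X)) ∧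
      ∀ j : ℕ, ∀ X ∈ g j, bnorm B (T X) = t ^ j * bnorm B X := by
  have hT0 : T (0 : L) = 0 := T.toLinearEquiv.map_zero
  -- T maps each stratum onto itself
  have hmap : ∀ k, Submodule.map (T.toLinearEquiv : L →ₗ[ℝ] L) (g k) = g k := by
    intro k
    apply Submodule.eq_of_le_of_finrank_eq
    · rintro x ⟨y, hy, rfl⟩
      exact hT k y hy
    · exact LinearEquiv.finrank_map_eq T.toLinearEquiv (g k)
  have hTsymm : ∀ k, ∀ x ∈ g k, T.symm x ∈ g k := by
    intro k x hx
    rw [← hmap k] at hx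
    obtain ⟨y, hy, rfl⟩ := hx
    have hy' : T.symm ((T.toLinearEquiv : L →ₗ[ℝ] L) y) = y := T.symm_apply_apply y
    rw [hy']
    exact hy
  have h1symm : ∀ X ∈ g 1, bnorm B (T.symm X) = t⁻¹ * bnorm B X := by
    intro X hX
    have h := h1 (T.symm X) (hTsymm 1 X hX)
    rw [LieEquiv.apply_symm_apply] at h
    rw [h]
    field_simp
  have le1 := conf_le hinner T (hT 1) ht h1
  have le2 := conf_le hinner T.symm (hTsymm 1) (inv_pos.mpr ht) h1symm
  have part2 : ∀ j : ℕ, ∀ X ∈ g j, bnorm B (T X) = t ^ j * bnorm B X := by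
    intro j X hX
    rcases Nat.eq_zero_or_pos j with hj0 | hjpos
    · subst hj0
      rw [hstrat.g_zero, Submodule.mem_bot] at hX
      subst hX
      rw [hT0, bnorm_zero]
      ring
    rcases le_or_gt j s with hjs | hjs
    · have u1 := le1 j hjpos hjs X hX
      have u2 := le2 j hjpos hjs (T X) (hT j X hX)
      rw [LieEquiv.symm_apply_apply] at u2
      have hpow : t ^ j * t⁻¹ ^ j = 1 := by
        rw [← mul_pow, mul_inv_cancel₀ ht.ne', one_pow]
      nlinarith [pow_pos ht j, bnorm_nonneg B X, bnorm_nonneg B (T X)]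
    · rw [hstrat.g_of_gt j hjs, Submodule.mem_bot] at hX
      subst hX
      rw [hT0, bnorm_zero]
      ring
  refine ⟨?_, part2⟩
  intro δ hδ X
  have hXtop : X ∈ ⨆ i, g i := by
    rw [hstrat.isInternal.submodule_iSup_eq_top]
    trivial
  obtain ⟨f, hf, hfX⟩ := (Submodule.mem_iSup_iff_exists_finsupp g X).mp hXtop
  have qsum : ∀ (x : ℕ → L), (∀ i, x i ∈ g i) →
      B (∑ i ∈ f.support, x i) (∑ i ∈ f.support, x i) =
        ∑ i ∈ f.support, B (x i) (x i) := by
    intro x hx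
    calc (B (∑ i ∈ f.support, x i)) (∑ i ∈ f.support, x i)
        = ∑ i ∈ f.support, ∑ j ∈ f.support, B (x i) (x j) := by
          rw [map_sum B x f.support, LinearMap.sum_apply]
          exact Finset.sum_congr rfl fun i _ => map_sum _ _ _
      _ = ∑ i ∈ f.support, B (x i) (x i) :=
          Finset.sum_congr rfl fun i hi =>
            Finset.sum_eq_single i
              (fun j _ hne =>
                hinner.strata_orth i j (Ne.symm hne) (x i) (hx i) (x j) (hx j))
              (fun hni => absurd hi hni)
  have hXs : X = ∑ i ∈ f.support, f i := by rw [← hfX]; rfl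
  have hTX : T X = ∑ i ∈ f.support, T (f i) := by
    rw [hXs]
    exact map_sum (T.toLinearEquiv : L →ₗ[ℝ] L) _ _
  have hδX : δ X = ∑ i ∈ f.support, (t ^ i) • f i := by
    rw [hXs, map_sum]
    exact Finset.sum_congr rfl fun i _ => hδ i (f i) (hf i)
  have q1 : B (T X) (T X) = ∑ i ∈ f.support, (t ^ i) ^ 2 * B (f i) (f i) := by
    rw [hTX, qsum (fun i => T (f i)) (fun i => hT i (f i) (hf i))]
    refine Finset.sum_congr rfl fun i _ => ?_
    rw [bnorm_sq hinner.posdef (T (f i)), part2 i (f i) (hf i), mul_pow,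
      ← bnorm_sq hinner.posdef (f i)]
  have q2 : B (δ X) (δ X) = ∑ i ∈ f.support, (t ^ i) ^ 2 * B (f i) (f i) := by
    rw [hδX, qsum (fun i => t ^ i • f i) (fun i => Submodule.smul_mem _ _ (hf i))]
    refine Finset.sum_congr rfl fun i _ => ?_
    simp only [map_smul, LinearMap.smul_apply, smul_eq_mul]
    ring
  rw [bnorm, bnorm, q1, q2]
end
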